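/- arXiv:1905.00827 — 2 statements merged into one kernel-verified Lean document; each statement's English description precedes it below -/
import Mathlib

section
/- Let V be a Zariski closed subset of (ℂˣ)ⁿ and let X be a weakly atypical subvariety of V, i.e. X is an irreducible component of V ∩ T for some weakly special subvariety T of (ℂˣ)ⁿ with dim X > dim V + dim T − n. Then X is an irreducible component of V ∩ ⟨X⟩_ws and dim X > dim V + dim ⟨X⟩_ws − n, where ⟨X⟩_ws is the weakly special closure of X. -/
open scoped Pointwise

noncomputable section

/-- The algebraic torus `(ℂˣ)ⁿ`. -/
abbrev Torus (n : ℕ) : Type := Fin n → ℂˣ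

namespace ZP

/-- The natural embedding of the torus into affine `n`-space. -/
def tEmbed {n : ℕ} : Torus n → (Fin n → ℂ) := fun x i => (x i : ℂ)

/-- The zero locus in affine space of an ideal of polynomials. -/
def affZeroLocus {k : ℕ} (I : Ideal (MvPolynomial (Fin k) ℂ)) : Set (Fin k → ℂ) :=
  {x | ∀ p ∈ I, MvPolynomial.eval x p = 0}

/-- Zariski closed subsets of affine space `ℂᵏ`. -/
def IsAClosed {k : ℕ} (V : Set (Fin k → ℂ)) : Prop :=
  ∃ I : Ideal (MvPolynomial (Fin k) ℂ), V = affZeroLocus I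

/-- Zariski closed subsets of the torus `(ℂˣ)ⁿ`: traces on the torus of
Zariski closed subsets of affine space. -/
def IsTClosed {n : ℕ} (V : Set (Torus n)) : Prop :=
  ∃ I : Ideal (MvPolynomial (Fin n) ℂ), V = tEmbed ⁻¹' affZeroLocus I

/-- Irreducibility with respect to the Zariski topology on the torus. -/
def TIrred {n : ℕ} (X : Set (Torus n)) : Prop :=
  X.Nonempty ∧ ∀ C₁ C₂ : Set (Torus n), IsTClosed C₁ → IsTClosed C₂ →
    X ⊆ C₁ ∪ C₂ → X ⊆ C₁ ∨ X ⊆ C₂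

/-- Zariski closure in the torus. -/
def tclosure {n : ℕ} (S : Set (Torus n)) : Set (Torus n) := ⋂₀ {C | IsTClosed C ∧ S ⊆ C}

/-- Krull dimension (w.r.t. the Zariski topology) of a subset of the torus:
the Krull dimension of the poset of irreducible Zariski closed subsets of its
Zariski closure. -/
def tdim {n : ℕ} (S : Set (Torus n)) : WithBot ℕ∞ :=
  Order.krullDim {C : Set (Torus n) // IsTClosed C ∧ TIrred C ∧ C ⊆ tclosure S}

/-- `X` is an irreducible component of `A` (in the Zariski topology):
a maximal irreducible Zariski closed subset of `A`. -/
def IsCompOf {n : ℕ} (X A : Set (Torus n)) : Prop :=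
  IsTClosed X ∧ TIrred X ∧ X ⊆ A ∧
    ∀ Y : Set (Torus n), IsTClosed Y → TIrred Y → X ⊆ Y → Y ⊆ A → Y = X

/-- An algebraic subgroup of the torus is a Zariski closed subgroup. -/
def IsAlgSubgroup {n : ℕ} (H : Subgroup (Torus n)) : Prop := IsTClosed (H : Set (Torus n))

/-- Weakly special subvarieties of the torus: cosets of irreducible algebraic subgroups. -/
def WeaklySpecial {n : ℕ} (T : Set (Torus n)) : Prop :=
  ∃ (g : Torus n) (H : Subgroup (Torus n)), IsAlgSubgroup H ∧ TIrred (H : Set (Torus n)) ∧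
    T = g • (H : Set (Torus n))

/-- Special subvarieties of the torus: torsion cosets of irreducible algebraic subgroups. -/
def Special {n : ℕ} (T : Set (Torus n)) : Prop :=
  ∃ (g : Torus n) (H : Subgroup (Torus n)), IsOfFinOrder g ∧ IsAlgSubgroup H ∧
    TIrred (H : Set (Torus n)) ∧ T = g • (H : Set (Torus n))

/-- `Γ`-special subvarieties: weakly special subvarieties containing a point of `Γ`. -/
def GammaSpecial {n : ℕ} (Γ : Set (Torus n)) (T : Set (Torus n)) : Prop :=
  WeaklySpecial T ∧ (T ∩ Γ).Nonempty

/-- The weakly special closure of a set: the smallest weakly special subvariety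
containing it (realised as the intersection of all of them). -/
def wsClosure {n : ℕ} (X : Set (Torus n)) : Set (Torus n) :=
  ⋂₀ {W | WeaklySpecial W ∧ X ⊆ W}

/-- The special closure of a set. -/
def spClosure {n : ℕ} (X : Set (Torus n)) : Set (Torus n) :=
  ⋂₀ {W | Special W ∧ X ⊆ W}

/-- A subgroup `Γ` has finite rank if `dim_ℚ (Γ ⊗_ℤ ℚ)` is finite. -/
def FiniteRank {n : ℕ} (Γ : Subgroup (Torus n)) : Prop :=
  Module.Finite ℚ (TensorProduct ℤ ℚ (Additive Γ))

/-- `X` is a `Γ`-atypical subvariety of `V` (in the ambient torus `(ℂˣ)ⁿ`):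
an atypical component of the intersection of `V` with some weakly special
subvariety, whose weakly special closure is `Γ`-special. -/
def GammaAtypical {n : ℕ} (Γ V X : Set (Torus n)) : Prop :=
  (∃ T : Set (Torus n), WeaklySpecial T ∧ IsCompOf X (V ∩ T) ∧
    tdim X + (n : WithBot ℕ∞) > tdim V + tdim T) ∧
  GammaSpecial Γ (wsClosure X)

/-- `X` is a `Γ`-atypical subvariety of `V` in `S`. -/
def GammaAtypicalIn {n : ℕ} (Γ S V X : Set (Torus n)) : Prop :=
  (∃ T : Set (Torus n), WeaklySpecial T ∧ T ⊆ S ∧ IsCompOf X (V ∩ T) ∧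
    tdim X + tdim S > tdim V + tdim T) ∧
  GammaSpecial Γ (wsClosure X)


lemma tclosure_mono {n : ℕ} {S₁ S₂ : Set (Torus n)} (h : S₁ ⊆ S₂) :
    tclosure S₁ ⊆ tclosure S₂ :=
  fun _ hx C hC => hx C ⟨hC.1, h.trans hC.2⟩

lemma tdim_mono {n : ℕ} {S₁ S₂ : Set (Torus n)} (h : S₁ ⊆ S₂) : tdim S₁ ≤ tdim S₂ :=
  Order.krullDim_le_of_strictMono
    (fun C => ⟨C.1, C.2.1, C.2.2.1, C.2.2.2.trans (tclosure_mono h)⟩) fun _ _ hlt => hlt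

lemma subset_wsClosure {n : ℕ} (X : Set (Torus n)) : X ⊆ wsClosure X :=
  fun _ hx _ hW => hW.2 hx

lemma wsClosure_subset {n : ℕ} {X W : Set (Torus n)} (hW : WeaklySpecial W) (hXW : X ⊆ W) :
    wsClosure X ⊆ W :=
  Set.sInter_subset_of_mem ⟨hW, hXW⟩

lemma IsCompOf.of_subset {n : ℕ} {X A B : Set (Torus n)} (hX : IsCompOf X A) (hXB : X ⊆ B)
    (hBA : B ⊆ A) : IsCompOf X B :=
  ⟨hX.1, hX.2.1, hXB, fun Y hYc hYi hXY hYB => hX.2.2.2 Y hYc hYi hXY (hYB.trans hBA)⟩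

theorem ws_closure_atypical_general {n : ℕ} (V T X : Set (Torus n))
    (hT : WeaklySpecial T) (hX : IsCompOf X (V ∩ T))
    (hatyp : tdim X + (n : WithBot ℕ∞) > tdim V + tdim T) :
    IsCompOf X (V ∩ wsClosure X) ∧
      tdim X + (n : WithBot ℕ∞) > tdim V + tdim (wsClosure X) := by
  have hXV : X ⊆ V := hX.2.2.1.trans Set.inter_subset_left
  have hwsT : wsClosure X ⊆ T := wsClosure_subset hT (hX.2.2.1.trans Set.inter_subset_right)
  refine ⟨hX.of_subset (Set.subset_inter hXV (subset_wsClosure X))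
    (Set.inter_subset_inter_right V hwsT), ?_⟩
  calc tdim V + tdim (wsClosure X) ≤ tdim V + tdim T := add_le_add_right (tdim_mono hwsT) _
    _ < tdim X + n := hatyp

/-- **Lemma 2.1** (torus case). If `X` is a weakly atypical subvariety of `V`,
i.e. an atypical component of `V ∩ T` for some weakly special `T`, then `X` is
an (atypical) component of `V ∩ ⟨X⟩_ws`, where `⟨X⟩_ws` is the weakly special
closure of `X`. -/
theorem ws_closure_atypical {n : ℕ} (V T X : Set (Torus n)) (hV : IsTClosed V)
    (hT : WeaklySpecial T) (hX : IsCompOf X (V ∩ T))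
    (hatyp : tdim X + (n : WithBot ℕ∞) > tdim V + tdim T) :
    IsCompOf X (V ∩ wsClosure X) ∧
      tdim X + (n : WithBot ℕ∞) > tdim V + tdim (wsClosure X) :=
  ws_closure_atypical_general V T X hT hX hatyp

end ZP
end
end

section
/- Let γ ∈ ℂˣ be transcendental over ℚ. Let Γ₁ be the torsion subgroup of ℂˣ, let Γ₂ = { x ∈ ℂˣ : xᵐ ∈ ⟨γ⟩ for some integer m ≥ 1 } be the division closure of the cyclic subgroup generated by γ, and let Γ = Γ₁ × Γ₂ ⊆ (ℂˣ)². Set S = { (y₁,y₂) ∈ (ℂˣ)² : y₁y₂ = γ } and T = { (y₁,y₂) ∈ (ℂˣ)² : y₁²y₂ = γ² }. Then: (i) S and T each contain a point of Γ (namely (1,γ) ∈ S and (1,γ²) ∈ T), so S and T are Γ-special; (ii) S ∩ T = { (γ, 1) }; and (iii) (γ,1) ∉ Γ, since γ is not a root of unity. In particular, the intersection of two Γ-special subvarieties of (ℂˣ)² need not contain a point of Γ, so the irreducible components of such intersections need not be Γ-special. -/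
open scoped Pointwise

noncomputable section

namespace ZP

/-! The subgroup `{y₀ᵏ y₁ = 1}` of `(ℂˣ)²` is the image of the cocharacter `t ↦ (t, t⁻ᵏ)`.
Restricted to such a curve a polynomial becomes a Laurent polynomial in `t`, so it vanishes
identically or at finitely many points; since `ℂˣ` is infinite, the image is Zariski irreducible,
and `S`, `T` are cosets of irreducible algebraic subgroups. On the other hand `y₀y₁ = γ` and
`y₀²y₁ = γ²` force `y₀ = γ`, `y₁ = 1`, and a transcendental `γ` is not a root of unity, so the
unique point of `S ∩ T` lies outside `Γ`. -/

open MvPolynomial LaurentPolynomial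

theorem _root_.IsOfFinOrder.isIntegral {R A : Type*} [CommRing R] [Ring A] [Algebra R A]
    {x : A} (hx : IsOfFinOrder x) : IsIntegral R x := by
  obtain ⟨n, hn, hxn⟩ := isOfFinOrder_iff_pow_eq_one.mp hx
  exact IsIntegral.of_pow hn (hxn ▸ isIntegral_one)

theorem _root_.LaurentPolynomial.finite_setOf_eval₂_eq_zero {R : Type*} [CommRing R]
    [IsDomain R] {f : R[T;T⁻¹]} (hf : f ≠ 0) : {x : Rˣ | eval₂ (RingHom.id R) x f = 0}.Finite := by
  obtain ⟨n, g, hg⟩ := f.exists_T_pow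
  have hg0 : g ≠ 0 := by
    rintro rfl
    rw [map_zero, eq_comm, (isUnit_T (n : ℤ)).mul_left_eq_zero] at hg
    exact hf hg
  refine ((Polynomial.finite_setOfPred_isRoot hg0).preimage Units.val_injective.injOn).subset ?_
  intro x hx
  have : eval₂ (RingHom.id R) x (Polynomial.toLaurent g) = 0 := by
    rw [hg, map_mul, hx, zero_mul]
  simpa [Polynomial.IsRoot] using this

theorem _root_.MonoidHom.setOf_apply_eq_eq_smul_ker {G H : Type*} [Group G] [Group H]
    (f : G →* H) (g : G) : {y | f y = f g} = g • (f.ker : Set G) := by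
  ext y
  rw [Set.mem_ofPred_eq, Set.mem_smul_set_iff_inv_smul_mem, SetLike.mem_coe, MonoidHom.mem_ker,
    smul_eq_mul, map_mul, map_inv, inv_mul_eq_one, eq_comm]

theorem isTClosed_setOf_eval_eq_zero {n : ℕ} (q : MvPolynomial (Fin n) ℂ) :
    IsTClosed {y : Torus n | eval (tEmbed y) q = 0} := by
  refine ⟨Ideal.span {q}, Set.ext fun y => ?_⟩
  exact (Ideal.span_singleton_le_iff_mem (RingHom.ker (eval (tEmbed y)))).symm

theorem eval_tEmbed_zpow {n : ℕ} (a : Fin n → ℤ) (t : ℂˣ) (p : MvPolynomial (Fin n) ℂ) :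
    eval (tEmbed fun i => t ^ a i) p =
      LaurentPolynomial.eval₂ (RingHom.id ℂ) t (aeval (fun i => (T (a i) : ℂ[T;T⁻¹])) p) := by
  induction p using MvPolynomial.induction_on with
  | C r => simp
  | add p q hp hq => simp [hp, hq]
  | mul_X p i hp => simp [hp, tEmbed]

theorem range_subset_or_finite_preimage_of_isTClosed {α : Type*} {n : ℕ} {φ : α → Torus n}
    (hφ : ∀ p, (∀ t, eval (tEmbed (φ t)) p = 0) ∨ {t | eval (tEmbed (φ t)) p = 0}.Finite)
    {C : Set (Torus n)} (hC : IsTClosed C) : Set.range φ ⊆ C ∨ (φ ⁻¹' C).Finite := by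
  obtain ⟨I, rfl⟩ := hC
  by_cases h : ∀ p ∈ I, ∀ t, eval (tEmbed (φ t)) p = 0
  · left
    rintro _ ⟨t, rfl⟩ p hp
    exact h p hp t
  · right
    push Not at h
    obtain ⟨p, hpI, t, hpt⟩ := h
    exact ((hφ p).resolve_left fun h => hpt (h t)).subset fun s hs => hs p hpI

theorem tIrred_range {α : Type*} [Infinite α] {n : ℕ} {φ : α → Torus n}
    (hφ : ∀ p, (∀ t, eval (tEmbed (φ t)) p = 0) ∨ {t | eval (tEmbed (φ t)) p = 0}.Finite) :
    TIrred (Set.range φ) := by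
  refine ⟨Set.range_nonempty φ, fun C₁ C₂ hC₁ hC₂ hsub => ?_⟩
  rcases range_subset_or_finite_preimage_of_isTClosed hφ hC₁ with h₁ | h₁
  · exact Or.inl h₁
  rcases range_subset_or_finite_preimage_of_isTClosed hφ hC₂ with h₂ | h₂
  · exact Or.inr h₂
  refine absurd ((h₁.union h₂).subset fun t _ => ?_) Set.infinite_univ
  exact hsub (Set.mem_range_self t)

instance : Infinite ℂˣ :=
  Infinite.of_injective (fun n : ℕ => Units.mk0 ((n : ℂ) + 1) (Nat.cast_add_one_ne_zero n))
    fun m n h => by simpa using congrArg Units.val h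

theorem tIrred_range_zpow {n : ℕ} (a : Fin n → ℤ) :
    TIrred (Set.range fun (t : ℂˣ) (i : Fin n) => t ^ a i) := by
  refine tIrred_range fun p => ?_
  simp only [eval_tEmbed_zpow]
  by_cases hp : aeval (fun i => (T (a i) : ℂ[T;T⁻¹])) p = 0
  · simp [hp]
  · exact Or.inr (LaurentPolynomial.finite_setOf_eval₂_eq_zero hp)

def powMulChar (k : ℕ) : Torus 2 →* ℂˣ :=
  (powMonoidHom k).comp (Pi.evalMonoidHom (fun _ : Fin 2 => ℂˣ) 0) *
    Pi.evalMonoidHom (fun _ : Fin 2 => ℂˣ) 1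

theorem powMulChar_apply (k : ℕ) (y : Torus 2) : powMulChar k y = y 0 ^ k * y 1 := rfl

theorem ker_powMulChar_eq_range (k : ℕ) :
    ((powMulChar k).ker : Set (Torus 2)) =
      Set.range fun (t : ℂˣ) (i : Fin 2) => t ^ ![1, -(k : ℤ)] i := by
  ext y
  simp only [SetLike.mem_coe, MonoidHom.mem_ker, powMulChar_apply, Set.mem_range, funext_iff,
    Fin.forall_fin_two, Matrix.cons_val_zero, Matrix.cons_val_one, zpow_one, exists_eq_left,
    zpow_neg, zpow_natCast]
  rw [inv_eq_iff_mul_eq_one, mul_comm]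

theorem isAlgSubgroup_ker_powMulChar (k : ℕ) : IsAlgSubgroup (powMulChar k).ker := by
  have hker : ((powMulChar k).ker : Set (Torus 2)) =
      {y | eval (tEmbed y) (X 0 ^ k * X 1 - 1) = 0} := by
    ext y
    simp [powMulChar_apply, tEmbed, Units.ext_iff, sub_eq_zero]
  unfold IsAlgSubgroup
  rw [hker]
  exact isTClosed_setOf_eval_eq_zero _

theorem weaklySpecial_setOf_pow_mul_eq (k : ℕ) (c : ℂˣ) :
    WeaklySpecial {y : Torus 2 | y 0 ^ k * y 1 = c} := by
  refine ⟨![1, c], (powMulChar k).ker, isAlgSubgroup_ker_powMulChar k,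
    ker_powMulChar_eq_range k ▸ tIrred_range_zpow _, ?_⟩
  simpa [powMulChar_apply] using (powMulChar k).setOf_apply_eq_eq_smul_ker ![1, c]

theorem _root_.mul_eq_and_sq_mul_eq_sq_iff {G : Type*} [CommGroup G] {a b c : G} :
    a * b = c ∧ a ^ 2 * b = c ^ 2 ↔ a = c ∧ b = 1 := by
  constructor
  · rintro ⟨h₁, h₂⟩
    have ha : a = c := by
      rw [pow_two, mul_assoc, h₁, pow_two] at h₂
      exact mul_right_cancel h₂
    subst ha
    exact ⟨rfl, mul_eq_left.mp h₁⟩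
  · rintro ⟨rfl, rfl⟩
    simp [pow_two]

/-- **Section 5 counterexample.** Let `γ ∈ ℂˣ` be transcendental over `ℚ`, let
`Γ₁` be the torsion subgroup of `ℂˣ`, `Γ₂` the division closure of the cyclic
group generated by `γ`, and `Γ = Γ₁ × Γ₂ ⊆ (ℂˣ)²`. With
`S = {y₁y₂ = γ}` and `T = {y₁²y₂ = γ²}`:
(i) `(1,γ) ∈ S ∩ Γ` and `(1,γ²) ∈ T ∩ Γ`, so `S` and `T` are `Γ`-special;
(ii) `S ∩ T = {(γ,1)}`; (iii) `(γ,1) ∉ Γ`. In particular the intersection of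
two `Γ`-special subvarieties need not contain a point of `Γ`. -/
theorem gamma_special_intersection_counterexample (γ : ℂˣ)
    (hγ : Transcendental ℚ (γ : ℂ))
    (Γ₁ Γ₂ : Set ℂˣ) (hΓ₁ : Γ₁ = {x : ℂˣ | IsOfFinOrder x})
    (hΓ₂ : Γ₂ = {x : ℂˣ | ∃ m : ℕ, 1 ≤ m ∧ x ^ m ∈ Subgroup.zpowers γ})
    (Γ : Set (Torus 2)) (hΓ : Γ = {x : Torus 2 | x 0 ∈ Γ₁ ∧ x 1 ∈ Γ₂})
    (S T : Set (Torus 2))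
    (hS : S = {y : Torus 2 | y 0 * y 1 = γ})
    (hT : T = {y : Torus 2 | (y 0) ^ 2 * y 1 = γ ^ 2}) :
    ((![1, γ] ∈ S ∩ Γ) ∧ (![1, γ ^ 2] ∈ T ∩ Γ)) ∧
    (GammaSpecial Γ S ∧ GammaSpecial Γ T) ∧
    S ∩ T = {![γ, 1]} ∧
    ![γ, (1 : ℂˣ)] ∉ Γ ∧
    ¬ (S ∩ T ∩ Γ).Nonempty := by
  have hΓ_one_pow (j : ℕ) : ![1, γ ^ j] ∈ Γ := by
    subst hΓ hΓ₁ hΓ₂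
    exact ⟨by simp, 1, le_rfl, by simp [Subgroup.npow_mem_zpowers]⟩
  have hγ_one_notMem : ![γ, (1 : ℂˣ)] ∉ Γ := by
    subst hΓ hΓ₁
    exact fun h => hγ (Units.isOfFinOrder_val.mpr h.1).isIntegral.isAlgebraic
  have hS_weaklySpecial : WeaklySpecial S := by
    simpa [hS] using weaklySpecial_setOf_pow_mul_eq 1 γ
  have hT_weaklySpecial : WeaklySpecial T := hT ▸ weaklySpecial_setOf_pow_mul_eq 2 (γ ^ 2)
  have hmemS : ![1, γ] ∈ S ∩ Γ := ⟨by simp [hS], by simpa using hΓ_one_pow 1⟩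
  have hmemT : ![1, γ ^ 2] ∈ T ∩ Γ := ⟨by simp [hT], hΓ_one_pow 2⟩
  have hST : S ∩ T = {![γ, 1]} := by
    ext y
    simp [hS, hT, mul_eq_and_sq_mul_eq_sq_iff, funext_iff, Fin.forall_fin_two]
  refine ⟨⟨hmemS, hmemT⟩, ⟨⟨hS_weaklySpecial, _, hmemS⟩, ⟨hT_weaklySpecial, _, hmemT⟩⟩, hST,
    hγ_one_notMem, ?_⟩
  rwa [hST, Set.singleton_inter_nonempty]

end ZP
end
end
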